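/- arXiv:math/0403506 — 5 statements merged into one kernel-verified Lean document; each statement's English description precedes it below -/
import Mathlib

section
/- The subset E' is a deformation of E into itself along the shift homotopy: the map H : [0,1] × E → E given by H(t, (f₁,…,fₙ)) = (T_t f₁,…,T_t fₙ) is continuous, takes values in E for every t ∈ [0,1], satisfies H(0, f) = f for all f ∈ E, and satisfies H(1, f) ∈ E' for all f ∈ E. In particular E can be continuously deformed within E into the subspace E'. -/
/-!
`T_t` (`halfLineShift t`) extends a function on `[0,∞)` by zero to `ℝ`, translates it by `t`
and restricts it back to `[0,∞)`. For `t ≥ 0` the translate still vanishes on `(-∞,0)`, so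
nothing is lost by the restriction: `T_t` is a linear isometry, hence preserves linear
independence. Joint continuity in `(t, f)` is the continuity of translation in `L^p(ℝ)`, `p < ∞`.
-/

open MeasureTheory Set

/-- `H = L²([0,∞), ℝ)`. -/
noncomputable abbrev Hsp : Type :=
  MeasureTheory.Lp ℝ 2 (MeasureTheory.volume.restrict (Set.Ici (0 : ℝ)))

open scoped ENNReal

noncomputable section

namespace ContinuousMap

variable {G : Type*} [AddGroup G] [TopologicalSpace G] [IsTopologicalAddGroup G]

def subRight (t : G) : C(G, G) := ⟨(· - t), continuous_sub_right t⟩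

theorem continuous_subRight : Continuous (subRight : G → C(G, G)) :=
  continuous_of_continuous_uncurry _ (continuous_snd.sub continuous_fst)

theorem measurePreserving_subRight [MeasurableSpace G] [MeasurableAdd G] [MeasurableNeg G]
    (μ : Measure G) [μ.IsAddRightInvariant] (t : G) : MeasurePreserving (subRight t) μ μ :=
  measurePreserving_sub_right μ t

end ContinuousMap

namespace MeasureTheory.Lp

variable {α E : Type*} [MeasurableSpace α] [NormedAddCommGroup E] {p : ℝ≥0∞} {μ : Measure α}
  {s : Set α}

def extendByZero (hs : MeasurableSet s) (f : Lp E p (μ.restrict s)) : Lp E p μ :=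
  ((memLp_indicator_iff_restrict hs).2 (Lp.memLp f)).toLp (s.indicator f)

theorem coeFn_extendByZero (hs : MeasurableSet s) (f : Lp E p (μ.restrict s)) :
    extendByZero hs f =ᵐ[μ] s.indicator f :=
  MemLp.coeFn_toLp _

theorem norm_extendByZero (hs : MeasurableSet s) (f : Lp E p (μ.restrict s)) :
    ‖extendByZero hs f‖ = ‖f‖ := by
  rw [extendByZero, norm_toLp, eLpNorm_indicator_eq_eLpNorm_restrict hs, norm_def]

variable (𝕜 : Type*) [NormedRing 𝕜] [Module 𝕜 E] [IsBoundedSMul 𝕜 E] [Fact (1 ≤ p)]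

def extendByZeroₗᵢ (hs : MeasurableSet s) : Lp E p (μ.restrict s) →ₗᵢ[𝕜] Lp E p μ where
  toFun := extendByZero hs
  map_add' f g := Lp.ext <| by
    filter_upwards [coeFn_extendByZero hs (f + g), coeFn_extendByZero hs f,
      coeFn_extendByZero hs g, Lp.coeFn_add (extendByZero hs f) (extendByZero hs g),
      (ae_eq_restrict_iff_indicator_ae_eq hs).1 (Lp.coeFn_add f g)] with x h h₁ h₂ hadd hind
    rw [h, hadd, Pi.add_apply, h₁, h₂, hind, indicator_add', Pi.add_apply]
  map_smul' c f := Lp.ext <| by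
    filter_upwards [coeFn_extendByZero hs (c • f), coeFn_extendByZero hs f,
      Lp.coeFn_smul c (extendByZero hs f),
      (ae_eq_restrict_iff_indicator_ae_eq hs).1 (Lp.coeFn_smul c f)] with x h h₁ hsmul hind
    rw [RingHom.id_apply, h, hsmul, Pi.smul_apply, h₁, hind]
    exact indicator_const_smul_apply s c f x
  norm_map' := norm_extendByZero hs

end MeasureTheory.Lp

section HalfLineShift

open Lp ContinuousMap

variable {E : Type*} [NormedAddCommGroup E] {p : ℝ≥0∞}

theorem coeFn_subRight_extendByZero (t : ℝ) (f : Lp E p (volume.restrict (Ici (0 : ℝ)))) :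
    compMeasurePreserving (subRight t) (measurePreserving_subRight volume t)
        (extendByZero measurableSet_Ici f) =ᵐ[volume] fun x => (Ici 0).indicator f (x - t) :=
  (coeFn_compMeasurePreserving _ _).trans <|
    (measurePreserving_subRight volume t).quasiMeasurePreserving.ae_eq_comp (coeFn_extendByZero _ f)

variable [NormedSpace ℝ E] [Fact (1 ≤ p)]

def halfLineShift (t : ℝ) :
    Lp E p (volume.restrict (Ici (0 : ℝ))) →L[ℝ] Lp E p (volume.restrict (Ici (0 : ℝ))) :=
  LpToLpRestrictCLM ℝ E ℝ volume p (Ici 0) ∘L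
    (compMeasurePreservingₗᵢ ℝ (subRight t)
      (measurePreserving_subRight volume t)).toContinuousLinearMap ∘L
    (extendByZeroₗᵢ ℝ measurableSet_Ici).toContinuousLinearMap

theorem halfLineShift_apply (t : ℝ) (f : Lp E p (volume.restrict (Ici (0 : ℝ)))) :
    halfLineShift t f = LpToLpRestrictCLM ℝ E ℝ volume p (Ici 0)
      (compMeasurePreserving (subRight t) (measurePreserving_subRight volume t)
        (extendByZero measurableSet_Ici f)) :=
  rfl

theorem coeFn_halfLineShift (t : ℝ) (f : Lp E p (volume.restrict (Ici (0 : ℝ)))) :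
    halfLineShift t f =ᵐ[volume.restrict (Ici 0)] fun x => if x < t then 0 else f (x - t) := by
  rw [halfLineShift_apply]
  refine (LpToLpRestrictCLM_coeFn ℝ _ _).trans ?_
  filter_upwards [ae_restrict_of_ae (s := Ici 0) (coeFn_subRight_extendByZero t f)] with x hx
  rw [hx]
  by_cases hxt : x < t <;> simp [hxt, indicator, sub_nonneg]

theorem extendByZero_halfLineShift {t : ℝ} (ht : 0 ≤ t)
    (f : Lp E p (volume.restrict (Ici (0 : ℝ)))) :
    extendByZero measurableSet_Ici (halfLineShift t f) =
      compMeasurePreserving (subRight t) (measurePreserving_subRight volume t)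
        (extendByZero measurableSet_Ici f) := by
  refine Lp.ext ?_
  filter_upwards [coeFn_extendByZero measurableSet_Ici (halfLineShift t f),
    (ae_eq_restrict_iff_indicator_ae_eq measurableSet_Ici).1 (coeFn_halfLineShift t f),
    coeFn_subRight_extendByZero t f] with x h₁ h₂ h₃
  rw [h₁, h₂, h₃]
  by_cases hxt : x < t
  · simp [indicator, hxt, sub_nonneg, not_le.2 hxt]
  · simp [indicator, hxt, sub_nonneg, not_lt.1 hxt, ht.trans (not_lt.1 hxt)]

theorem norm_halfLineShift {t : ℝ} (ht : 0 ≤ t) (f : Lp E p (volume.restrict (Ici (0 : ℝ)))) :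
    ‖halfLineShift t f‖ = ‖f‖ := by
  rw [← norm_extendByZero measurableSet_Ici, extendByZero_halfLineShift ht,
    norm_compMeasurePreserving, norm_extendByZero]

theorem halfLineShift_injective {t : ℝ} (ht : 0 ≤ t) :
    Function.Injective (halfLineShift t : Lp E p (volume.restrict (Ici (0 : ℝ))) → _) :=
  (AddMonoidHomClass.isometry_of_norm _ (norm_halfLineShift ht)).injective

theorem halfLineShift_zero :
    halfLineShift 0 = ContinuousLinearMap.id ℝ (Lp E p (volume.restrict (Ici (0 : ℝ)))) := by
  ext1 f
  refine Lp.ext ?_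
  filter_upwards [coeFn_halfLineShift 0 f, ae_restrict_mem measurableSet_Ici] with x hf hx
  simp [hf, not_lt.2 (mem_Ici.1 hx)]

theorem halfLineShift_ae_eq_zero (t : ℝ) (f : Lp E p (volume.restrict (Ici (0 : ℝ)))) :
    (halfLineShift t f : ℝ → E) =ᵐ[volume.restrict (Icc 0 t)] 0 := by
  rw [← restrict_Ico_eq_restrict_Icc]
  filter_upwards [ae_mono (Measure.restrict_mono Ico_subset_Ici_self le_rfl)
    (coeFn_halfLineShift t f), ae_restrict_mem measurableSet_Ico] with x hf hx
  simp [hf, hx.2]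

theorem continuous_halfLineShift (hp : p ≠ ∞) :
    Continuous fun q : ℝ × Lp E p (volume.restrict (Ici (0 : ℝ))) => halfLineShift q.1 q.2 := by
  simp only [halfLineShift_apply]
  exact (LpToLpRestrictCLM ℝ E ℝ volume p (Ici 0)).continuous.comp <|
    ((extendByZeroₗᵢ ℝ measurableSet_Ici).continuous.comp continuous_snd).compMeasurePreservingLp
      (continuous_subRight.comp continuous_fst) (fun q => measurePreserving_subRight volume q.1) hp

end HalfLineShift

end

theorem stmt6_general (n : ℕ) (T : ℝ → Hsp → Hsp)
    (hT : ∀ t, 0 ≤ t → ∀ f : Hsp,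
      (T t f : ℝ → ℝ) =ᵐ[MeasureTheory.volume.restrict (Set.Ici (0 : ℝ))]
        fun x => if x < t then 0 else f (x - t)) :
    (∀ t ∈ Set.Icc (0 : ℝ) 1, ∀ f : Fin n → Hsp, LinearIndependent ℝ f →
        LinearIndependent ℝ fun i => T t (f i)) ∧
    Continuous (fun p : Set.Icc (0 : ℝ) 1 × {f : Fin n → Hsp // LinearIndependent ℝ f} =>
        (fun i => T (p.1 : ℝ) ((p.2 : Fin n → Hsp) i) : Fin n → Hsp)) ∧
    (∀ f : {f : Fin n → Hsp // LinearIndependent ℝ f},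
        (fun i => T 0 ((f : Fin n → Hsp) i)) = (f : Fin n → Hsp)) ∧
    (∀ f : {f : Fin n → Hsp // LinearIndependent ℝ f}, ∀ i,
        (T 1 ((f : Fin n → Hsp) i) : ℝ → ℝ)
          =ᵐ[MeasureTheory.volume.restrict (Set.Icc (0 : ℝ) 1)] 0) := by
  have hT_eq : ∀ t, 0 ≤ t → T t = halfLineShift t := fun t ht =>
    funext fun f => Lp.ext ((hT t ht f).trans (coeFn_halfLineShift t f).symm)
  refine ⟨fun t ht f hf => ?_, ?_, fun f => ?_, fun f i => ?_⟩
  · rw [hT_eq t ht.1]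
    exact hf.map' _ (LinearMap.ker_eq_bot.2 (halfLineShift_injective ht.1))
  · have hT_pair : (fun q : Icc (0 : ℝ) 1 × {f : Fin n → Hsp // LinearIndependent ℝ f} =>
        fun i => T q.1 (q.2.1 i)) = fun q i => halfLineShift q.1 (q.2.1 i) := by
      funext q
      rw [hT_eq q.1 q.1.2.1]
    rw [hT_pair]
    have hshift := continuous_halfLineShift (E := ℝ) (p := 2) ENNReal.ofNat_ne_top
    exact continuous_pi fun i => hshift.comp
      (f := fun q : Icc (0 : ℝ) 1 × {f : Fin n → Hsp // LinearIndependent ℝ f} =>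
        ((q.1 : ℝ), q.2.1 i))
      ((continuous_subtype_val.comp continuous_fst).prodMk
        ((continuous_apply i).comp (continuous_subtype_val.comp continuous_snd)))
  · rw [hT_eq 0 le_rfl, halfLineShift_zero]
    rfl
  · rw [hT_eq 1 zero_le_one]
    exact halfLineShift_ae_eq_zero 1 _

/-- The subset `E'` is a deformation of `E` into itself along the
shift homotopy `H(t, (f₁,…,fₙ)) = (T_t f₁,…,T_t fₙ)`: this map takes values in
`E` for every `t ∈ [0,1]`, is continuous on `[0,1] × E`, satisfies `H(0,f) = f`,
and `H(1,f) ∈ E'` (components vanish a.e. on `[0,1]`) for every `f ∈ E`. -/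
theorem stmt6 (n : ℕ) (hn : 1 ≤ n) (T : ℝ → Hsp → Hsp)
    (hT : ∀ t, 0 ≤ t → ∀ f : Hsp,
      (T t f : ℝ → ℝ) =ᵐ[MeasureTheory.volume.restrict (Set.Ici (0 : ℝ))]
        fun x => if x < t then 0 else f (x - t)) :
    (∀ t ∈ Set.Icc (0 : ℝ) 1, ∀ f : Fin n → Hsp, LinearIndependent ℝ f →
        LinearIndependent ℝ fun i => T t (f i)) ∧
    Continuous (fun p : Set.Icc (0 : ℝ) 1 × {f : Fin n → Hsp // LinearIndependent ℝ f} =>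
        (fun i => T (p.1 : ℝ) ((p.2 : Fin n → Hsp) i) : Fin n → Hsp)) ∧
    (∀ f : {f : Fin n → Hsp // LinearIndependent ℝ f},
        (fun i => T 0 ((f : Fin n → Hsp) i)) = (f : Fin n → Hsp)) ∧
    (∀ f : {f : Fin n → Hsp // LinearIndependent ℝ f}, ∀ i,
        (T 1 ((f : Fin n → Hsp) i) : ℝ → ℝ)
          =ᵐ[MeasureTheory.volume.restrict (Set.Icc (0 : ℝ) 1)] 0) :=
  stmt6_general n T hT
end

section
/- Let (g₁,…,gₙ) ∈ E be an n-tuple whose components all vanish almost everywhere outside the interval [0,1], and let (f₁,…,fₙ) ∈ E'. Then for every t ∈ [0,1], the n-tuple (t g₁ + (1−t) f₁, …, t gₙ + (1−t) fₙ) is linearly independent over ℝ, i.e. lies in E. -/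
/-!
On `[0,1]` every `fᵢ` vanishes, so a relation `∑ cᵢ (t gᵢ + (1 - t) fᵢ) = 0` restricts there to
`t ∑ cᵢ gᵢ = 0`; off `[0,1]` every `gᵢ` vanishes, so `∑ cᵢ gᵢ = 0` everywhere and `c = 0` once
`t ≠ 0`. Abstractly: the functions vanishing on `s` and those vanishing on `sᶜ` form disjoint
submodules, and perturbing an independent family of one by a family of the other keeps it
independent. For `t = 0` the tuple is `f` itself.
-/

open MeasureTheory Set

theorem LinearIndependent.add_of_disjoint {ι R M : Type*} [Ring R] [AddCommGroup M] [Module R M]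
    {A B : Submodule R M} (hAB : Disjoint A B) {g f : ι → M} (hg : LinearIndependent R g)
    (hgA : ∀ i, g i ∈ A) (hfB : ∀ i, f i ∈ B) : LinearIndependent R (g + f) := by
  refine LinearIndependent.of_comp B.mkQ ?_
  have hcomp : B.mkQ ∘ (g + f) = B.mkQ ∘ g := by
    ext i
    simp [(Submodule.Quotient.mk_eq_zero B).2 (hfB i)]
  rw [hcomp]
  refine hg.map ?_
  rw [Submodule.ker_mkQ]
  exact hAB.mono_left (Submodule.span_le.2 (range_subset_iff.2 hgA))

namespace MeasureTheory.Lp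

variable {α 𝕜 E : Type*} [MeasurableSpace α] [NormedField 𝕜] [NormedAddCommGroup E]
  [NormedSpace 𝕜 E] {p : ENNReal} [Fact (1 ≤ p)] {μ : Measure α}

variable (𝕜 E p μ) in
noncomputable def vanishingOn (s : Set α) : Submodule 𝕜 (Lp E p μ) :=
  LinearMap.ker (LpToLpRestrictCLM α E 𝕜 μ p s).toLinearMap

theorem mem_vanishingOn {s : Set α} {u : Lp E p μ} :
    u ∈ vanishingOn 𝕜 E p μ s ↔ u =ᵐ[μ.restrict s] 0 := by
  rw [vanishingOn, LinearMap.mem_ker, ContinuousLinearMap.coe_coe, Lp.eq_zero_iff_ae_eq_zero]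
  exact (LpToLpRestrictCLM_coeFn 𝕜 s u).congr_left

theorem disjoint_vanishingOn_compl (s : Set α) :
    Disjoint (vanishingOn 𝕜 E p μ s) (vanishingOn 𝕜 E p μ sᶜ) := by
  refine Submodule.disjoint_def.2 fun u hs hsc => ?_
  have hae : ∀ᵐ x ∂μ.restrict (s ∪ sᶜ), u x = (0 : α → E) x :=
    (ae_restrict_union_iff _ _ _).2 ⟨mem_vanishingOn.1 hs, mem_vanishingOn.1 hsc⟩
  rw [union_compl_self, Measure.restrict_univ] at hae
  exact Lp.eq_zero_iff_ae_eq_zero.2 hae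

end MeasureTheory.Lp

theorem stmt7_general (n : ℕ) (g f : Fin n → Hsp)
    (hgE : LinearIndependent ℝ g)
    (hgsupp : ∀ i, ∀ᵐ x ∂(MeasureTheory.volume.restrict (Set.Ici (0 : ℝ))),
      x ∉ Set.Icc (0 : ℝ) 1 → (g i : ℝ → ℝ) x = 0)
    (hfE : LinearIndependent ℝ f)
    (hfvan : ∀ i, (f i : ℝ → ℝ) =ᵐ[MeasureTheory.volume.restrict (Set.Icc (0 : ℝ) 1)] 0)
    (t : ℝ) :
    LinearIndependent ℝ fun i => t • g i + (1 - t) • f i := by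
  rcases eq_or_ne t 0 with rfl | ht0
  · simpa using hfE
  have hg i : g i ∈ Lp.vanishingOn ℝ ℝ 2 _ (Icc 0 1)ᶜ :=
    Lp.mem_vanishingOn.2 ((ae_restrict_iff' measurableSet_Icc.compl).2 (hgsupp i))
  have hf i : f i ∈ Lp.vanishingOn ℝ ℝ 2 _ (Icc 0 1) :=
    Lp.mem_vanishingOn.2 <| (hfvan i).filter_mono <|
      ae_mono (Measure.restrict_mono subset_rfl Measure.restrict_le_self)
  exact (hgE.units_smul fun _ => Units.mk0 t ht0).add_of_disjoint
    (Lp.disjoint_vanishingOn_compl _).symm (fun i => Submodule.smul_mem _ _ (hg i))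
    (fun i => Submodule.smul_mem _ _ (hf i))

/-- If `(g₁,…,gₙ) ∈ E` has all components vanishing a.e. outside
`[0,1]`, and `(f₁,…,fₙ) ∈ E'` (linearly independent with components vanishing
a.e. on `[0,1]`), then for every `t ∈ [0,1]` the tuple
`(t g₁ + (1−t) f₁, …, t gₙ + (1−t) fₙ)` is linearly independent over `ℝ`. -/
theorem stmt7 (n : ℕ) (hn : 1 ≤ n) (g f : Fin n → Hsp)
    (hgE : LinearIndependent ℝ g)
    (hgsupp : ∀ i, ∀ᵐ x ∂(MeasureTheory.volume.restrict (Set.Ici (0 : ℝ))),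
      x ∉ Set.Icc (0 : ℝ) 1 → (g i : ℝ → ℝ) x = 0)
    (hfE : LinearIndependent ℝ f)
    (hfvan : ∀ i, (f i : ℝ → ℝ) =ᵐ[MeasureTheory.volume.restrict (Set.Icc (0 : ℝ) 1)] 0)
    (t : ℝ) (ht : t ∈ Set.Icc (0 : ℝ) 1) :
    LinearIndependent ℝ fun i => t • g i + (1 - t) • f i :=
  stmt7_general n g f hgE hgsupp hfE hfvan t
end

section
/- The space E is contractible: the identity map of E is homotopic, through continuous maps E → E, to a constant map. -/
open MeasureTheory Set

/-!
Choose a Hilbert basis `b` indexed by `κ × ℕ` and let `S` be the isometry sending `b (i, k)` to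
`b (i, k + 1)`. Every operator `(1 - t) • id + t • S` is injective (solve for the coordinates of a
kernel vector along each chain `b (i, 0), b (i, 1), …`), so the straight line from `f` to `S ∘ f`
stays inside the space of linearly independent tuples. The range of `S` is orthogonal to the
vectors `b (i, 0)`; a tuple `w` of them spans a subspace meeting the span of `S ∘ f` only in `0`,
and then the straight line from `S ∘ f` to `w` stays inside that space as well.
-/

open Function Submodule
open scoped InnerProductSpace

theorem LinearIndependent.lineMap_of_disjoint {ι V : Type*} [AddCommGroup V] [Module ℝ V]
    {f g : ι → V} (hf : LinearIndependent ℝ f) (hg : LinearIndependent ℝ g)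
    (hfg : Disjoint (span ℝ (range f)) (span ℝ (range g))) (t : ℝ) :
    LinearIndependent ℝ (AffineMap.lineMap f g t) := by
  rw [linearIndependent_iff'] at hf hg ⊢
  intro s c hc
  set x := ∑ i ∈ s, c i • f i
  set y := ∑ i ∈ s, c i • g i
  have hxy : (1 - t) • x + t • y = 0 := by
    simp only [x, y, ← hc, AffineMap.lineMap_apply_module, Finset.smul_sum, smul_add,
      Finset.sum_add_distrib, Pi.add_apply, Pi.smul_apply, smul_comm (c _)]
  have hx : (1 - t) • x ∈ span ℝ (range f) :=
    smul_mem _ _ (sum_mem fun i _ => smul_mem _ _ (subset_span (mem_range_self i)))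
  have hy : t • y ∈ span ℝ (range g) :=
    smul_mem _ _ (sum_mem fun i _ => smul_mem _ _ (subset_span (mem_range_self i)))
  have hx0 : (1 - t) • x = 0 :=
    disjoint_def.1 hfg _ hx (by rw [eq_neg_of_add_eq_zero_left hxy]; exact neg_mem hy)
  rcases eq_or_ne t 1 with rfl | ht
  · exact hg s c (by simpa using hxy)
  · exact hf s c ((smul_eq_zero.1 hx0).resolve_left (sub_ne_zero.2 ht.symm))

theorem ContinuousMap.Homotopic.of_lineMap {X E : Type*} [TopologicalSpace X] [AddCommGroup E]
    [TopologicalSpace E] [IsTopologicalAddGroup E] [Module ℝ E] [ContinuousSMul ℝ E]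
    {p : E → Prop} {f g : C(X, Subtype p)}
    (h : ∀ x, ∀ t : unitInterval, p (AffineMap.lineMap (f x : E) (g x) (t : ℝ))) :
    f.Homotopic g :=
  ⟨{ toFun := fun q => ⟨AffineMap.lineMap (f q.2 : E) (g q.2) (q.1 : ℝ), h q.2 q.1⟩
     continuous_toFun := by
       refine Continuous.subtype_mk ?_ _
       simp only [AffineMap.lineMap_apply_module]
       fun_prop
     map_zero_left := by simp
     map_one_left := by simp }⟩

theorem contractibleSpace_linearIndependent_of_injective_lineMap {ι V : Type*} [AddCommGroup V]
    [Module ℝ V] [TopologicalSpace V] [IsTopologicalAddGroup V] [ContinuousSMul ℝ V]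
    (S : V →L[ℝ] V)
    (hS : ∀ t : unitInterval, Injective (AffineMap.lineMap (LinearMap.id : V →ₗ[ℝ] V) S (t : ℝ)))
    {w : ι → V} (hw : LinearIndependent ℝ w)
    (hwS : Disjoint (span ℝ (range w)) (LinearMap.range (S : V →ₗ[ℝ] V))) :
    ContractibleSpace {f : ι → V // LinearIndependent ℝ f} := by
  have hSinj : Injective S := by simpa using hS 1
  let shiftS : C({f : ι → V // LinearIndependent ℝ f}, {f : ι → V // LinearIndependent ℝ f}) :=
    ⟨fun f => ⟨S ∘ f.1, f.2.map' _ (LinearMap.ker_eq_bot.2 hSinj)⟩,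
      (continuous_pi fun i => S.continuous.comp
        ((continuous_apply i).comp continuous_subtype_val)).subtype_mk _⟩
  rw [contractible_iff_id_nullhomotopic]
  refine ⟨⟨w, hw⟩, .trans (g := shiftS) (.of_lineMap fun f t => ?_) (.of_lineMap fun f t => ?_)⟩
  · show LinearIndependent ℝ (AffineMap.lineMap f.1 (S ∘ f.1) (t : ℝ))
    have : AffineMap.lineMap f.1 (S ∘ f.1) (t : ℝ) =
        AffineMap.lineMap (LinearMap.id : V →ₗ[ℝ] V) S (t : ℝ) ∘ f.1 := by
      ext i
      simp [AffineMap.lineMap_apply_module]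
    rw [this]
    exact f.2.map' _ (LinearMap.ker_eq_bot.2 (hS t))
  · refine (f.2.map' _ (LinearMap.ker_eq_bot.2 hSinj)).lineMap_of_disjoint hw ?_ _
    refine hwS.symm.mono_left (span_le.2 ?_)
    rintro _ ⟨i, rfl⟩
    exact LinearMap.mem_range_self _ _

namespace HilbertBasis

variable {ι 𝕜 E : Type*} [RCLike 𝕜] [NormedAddCommGroup E] [InnerProductSpace 𝕜 E]

theorem eq_zero_of_forall_inner_eq_zero (b : HilbertBasis ι 𝕜 E) {x : E}
    (h : ∀ i, ⟪b i, x⟫_𝕜 = 0) : x = 0 :=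
  b.repr.injective (lp.ext (funext fun i => by simp [b.repr_apply_apply, h i]))

theorem infinite_of_not_finiteDimensional (b : HilbertBasis ι 𝕜 E)
    (hE : ¬FiniteDimensional 𝕜 E) : Infinite ι := by
  rw [← not_finite_iff_infinite]
  intro
  have := Fintype.ofFinite ι
  exact hE (.of_basis b.toOrthonormalBasis.toBasis)

section Shift

variable [CompleteSpace E]

noncomputable def shift (b : HilbertBasis ι 𝕜 E) {σ : ι → ι} (hσ : Injective σ) : E →ₗᵢ[𝕜] E :=
  (b.orthonormal.comp σ hσ).orthogonalFamily.linearIsometry.comp b.repr.toLinearIsometry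

variable (b : HilbertBasis ι 𝕜 E) {σ : ι → ι} (hσ : Injective σ)

theorem shift_apply_self (i : ι) : b.shift hσ (b i) = b (σ i) := by
  classical
  simp [shift, b.repr_self]

theorem inner_apply_shift (i : ι) (x : E) : ⟪b (σ i), b.shift hσ x⟫_𝕜 = ⟪b i, x⟫_𝕜 := by
  rw [← shift_apply_self b hσ, LinearIsometry.inner_map_map]

theorem inner_shift_eq_zero {j : ι} (hj : j ∉ range σ) (x : E) :
    ⟪b j, b.shift hσ x⟫_𝕜 = 0 := by
  have : (innerSL 𝕜 (b j)).comp (b.shift hσ).toContinuousLinearMap = 0 := by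
    refine ContinuousLinearMap.ext_on (dense_iff_topologicalClosure_eq_top.2 b.dense_span) ?_
    rintro _ ⟨i, rfl⟩
    simp [shift_apply_self, b.orthonormal.inner_eq_zero (fun h => hj ⟨i, h.symm⟩)]
  simpa using congr($this x)

end Shift

section ShiftSnd

variable [CompleteSpace E] {κ : Type*} (b : HilbertBasis (κ × ℕ) 𝕜 E)

noncomputable def shiftSnd : E →ₗᵢ[𝕜] E :=
  b.shift (injective_id.prodMap Nat.succ_injective)

theorem injective_lineMap_id_shiftSnd (t : 𝕜) :
    Injective (AffineMap.lineMap (LinearMap.id : E →ₗ[𝕜] E) b.shiftSnd.toLinearMap t) := by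
  refine (injective_iff_map_eq_zero _).2 fun x hx => ?_
  rcases eq_or_ne t 1 with rfl | ht
  · exact b.shiftSnd.injective (by simpa using hx)
  refine b.eq_zero_of_forall_inner_eq_zero fun ⟨i, k⟩ => ?_
  have hcoord (p) : (1 - t) * ⟪b p, x⟫_𝕜 + t * ⟪b p, b.shiftSnd x⟫_𝕜 = 0 := by
    simpa [AffineMap.lineMap_apply_module, inner_add_right, inner_smul_right]
      using congr(⟪b p, $hx⟫_𝕜)
  have h1t : (1 : 𝕜) - t ≠ 0 := sub_ne_zero.2 ht.symm
  induction k with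
  | zero =>
    have := hcoord (i, 0)
    rw [shiftSnd, b.inner_shift_eq_zero _ (by simp), mul_zero, add_zero] at this
    exact (mul_eq_zero.1 this).resolve_left h1t
  | succ k ih =>
    have hshift : ⟪b (i, k + 1), b.shiftSnd x⟫_𝕜 = ⟪b (i, k), x⟫_𝕜 :=
      b.inner_apply_shift (σ := Prod.map id Nat.succ) _ (i, k) x
    have := hcoord (i, k + 1)
    rw [hshift, ih, mul_zero, add_zero] at this
    exact (mul_eq_zero.1 this).resolve_left h1t

theorem mem_orthogonal_range_shiftSnd (i : κ) :
    b (i, 0) ∈ (LinearMap.range b.shiftSnd.toLinearMap)ᗮ := by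
  rw [mem_orthogonal']
  rintro _ ⟨x, rfl⟩
  exact b.inner_shift_eq_zero _ (by simp) x

end ShiftSnd

end HilbertBasis

theorem exists_hilbertBasis_prod_nat (𝕜 E : Type*) [RCLike 𝕜] [NormedAddCommGroup E]
    [InnerProductSpace 𝕜 E] [CompleteSpace E] (hE : ¬FiniteDimensional 𝕜 E) :
    ∃ κ : Set E, Infinite κ ∧ Nonempty (HilbertBasis (κ × ℕ) 𝕜 E) := by
  obtain ⟨κ, b, -⟩ := exists_hilbertBasis 𝕜 E
  have := b.infinite_of_not_finiteDimensional hE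
  obtain ⟨e⟩ : Nonempty (κ × ℕ ≃ κ) := Cardinal.eq.1 (by simp)
  refine ⟨κ, this, ⟨HilbertBasis.mk (b.orthonormal.comp e e.injective) ?_⟩⟩
  rw [EquivLike.range_comp, b.dense_span]

theorem contractibleSpace_linearIndependent_of_not_finiteDimensional {ι E : Type*} [Finite ι]
    [NormedAddCommGroup E] [InnerProductSpace ℝ E] [CompleteSpace E]
    (hE : ¬FiniteDimensional ℝ E) :
    ContractibleSpace {f : ι → E // LinearIndependent ℝ f} := by
  obtain ⟨κ, _, ⟨b⟩⟩ := exists_hilbertBasis_prod_nat ℝ E hE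
  let j : ι ↪ κ :=
    (Finite.equivFin ι).toEmbedding.trans (Fin.valEmbedding.trans (Infinite.natEmbedding κ))
  refine contractibleSpace_linearIndependent_of_injective_lineMap
    b.shiftSnd.toContinuousLinearMap (fun t => b.injective_lineMap_id_shiftSnd t)
    (w := fun i => b (j i, 0)) ?_ ?_
  · exact (b.orthonormal.comp _ fun i i' h => j.injective (Prod.ext_iff.1 h).1)
      |>.linearIndependent
  · exact (isOrtho_iff_le.2 (span_le.2 (range_subset_iff.2 fun i =>
      b.mem_orthogonal_range_shiftSnd (j i)))).disjoint

theorem MeasureTheory.L2.not_finiteDimensional_of_pairwise_disjoint {α : Type*}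
    [MeasurableSpace α] {μ : Measure α} {s : ℕ → Set α} (hs : ∀ k, MeasurableSet (s k))
    (hμ : ∀ k, μ (s k) ≠ ⊤) (hμ₀ : ∀ k, μ (s k) ≠ 0) (hd : Pairwise (Disjoint on s)) :
    ¬FiniteDimensional ℝ (Lp ℝ 2 μ) := by
  intro
  refine Module.Finite.not_linearIndependent_of_infinite (R := ℝ)
    (fun k => indicatorConstLp 2 (hs k) (hμ k) (1 : ℝ))
    (linearIndependent_of_ne_zero_of_inner_eq_zero (fun k => ?_) fun j k hjk => ?_)
  · rw [← norm_ne_zero_iff, norm_indicatorConstLp two_ne_zero ENNReal.ofNat_ne_top]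
    simp [measureReal_def, ENNReal.toReal_eq_zero_iff, hμ k, hμ₀ k]
  · dsimp only
    rw [L2.inner_indicatorConstLp_one, setIntegral_indicatorConstLp (hs j),
      (hd hjk).symm.inter_eq]
    simp

theorem not_finiteDimensional_Hsp : ¬FiniteDimensional ℝ Hsp := by
  refine L2.not_finiteDimensional_of_pairwise_disjoint (s := fun k : ℕ => Ico (k : ℝ) (k + 1))
    (fun k => measurableSet_Ico) (fun k => ?_) (fun k => ?_) ?_
  · rw [Measure.restrict_apply measurableSet_Ico]
    exact measure_ne_top_of_subset inter_subset_left (by simp)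
  · rw [Measure.restrict_apply measurableSet_Ico,
      inter_eq_left.2 (Ico_subset_Ici_self.trans (Ici_subset_Ici.2 k.cast_nonneg))]
    simp
  · intro j k hjk
    simpa using pairwise_disjoint_Ico_intCast ℝ (Nat.cast_injective.ne hjk)

theorem stmt9_general (n : ℕ) :
    ContractibleSpace {f : Fin n → Hsp // LinearIndependent ℝ f} :=
  contractibleSpace_linearIndependent_of_not_finiteDimensional not_finiteDimensional_Hsp

/-- The space `E` of linearly independent `n`-tuples in `Hⁿ`
(with the subspace topology of the product topology) is contractible:
the identity map of `E` is homotopic to a constant map. -/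
theorem stmt9 (n : ℕ) (hn : 1 ≤ n) :
    ContractibleSpace {f : Fin n → Hsp // LinearIndependent ℝ f} :=
  stmt9_general n
end

section
/- Let (v_k)_{k∈ℕ} be a Hilbert (orthonormal) basis of H. If (f₁,…,fₙ) ∈ Hⁿ is linearly independent over ℝ, then there exist indices i₁ < i₂ < … < iₙ in ℕ such that the n×n real matrix whose (j,k)-entry is the inner product ⟪f_j, v_{i_k}⟫ is invertible. Equivalently, the sets U_I, as I ranges over n-element subsets of ℕ, cover E. -/
/-!
Pairing with the Hilbert basis embeds `H` injectively and linearly into `ℕ → ℝ`, so the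
coefficient sequences `i ↦ ⟪f_j, v_i⟫` are linearly independent. For linearly independent
functions `g_1, …, g_n : α → K` the vectors `(g_j a)_j`, `a ∈ α`, span `Kⁿ`: a nonzero functional
vanishing on all of them would be a vanishing nontrivial combination of the `g_j`. Hence `n` of
these vectors form a basis, and listing the chosen points in increasing order gives the columns
of an invertible matrix.
-/

open MeasureTheory Set

open Module Submodule Function

section

variable {K V α : Type*} [Field K]

theorem exists_strictMono_linearIndependent_comp_of_span_eq_top [AddCommGroup V] [Module K V]
    [FiniteDimensional K V] [LinearOrder α] {c : α → V} (hc : span K (range c) = ⊤) {n : ℕ}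
    (hn : finrank K V = n) : ∃ idx : Fin n → α, StrictMono idx ∧ LinearIndependent K (c ∘ idx) := by
  obtain ⟨κ, a, -, hspan, hli⟩ := exists_linearIndependent' K c
  have := hli.finite
  let := Fintype.ofFinite κ
  have hcard : Fintype.card κ = n := by
    rw [← hn, finrank_eq_card_basis (Basis.mk hli (by rw [hspan, hc]))]
  let e : Fin n ≃ κ := (Fintype.equivFinOfCardEq hcard).symm
  let idx : Fin n → α := a ∘ e
  have hidx : LinearIndependent K (c ∘ idx) := hli.comp e e.injective
  let σ := Tuple.sort idx
  have hsorted : LinearIndependent K (c ∘ idx ∘ σ) := hidx.comp σ σ.injective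
  exact ⟨idx ∘ σ,
    (Tuple.monotone_sort idx).strictMono_of_injective (hsorted.injective.of_comp (f := c)), hsorted⟩

theorem LinearIndependent.span_range_swap_eq_top {ι : Type*} [Fintype ι] {g : ι → α → K}
    (hg : LinearIndependent K g) : span K (range (swap g)) = ⊤ := by
  classical
  by_contra h
  obtain ⟨φ, hφ, hle⟩ := (span K _).exists_le_ker_of_lt_top (lt_top_iff_ne_top.mpr h)
  have hvanish : ∑ i, φ (fun j ↦ if i = j then 1 else 0) • g i = 0 := by
    funext a
    have := hle (subset_span ⟨a, rfl⟩)
    rw [LinearMap.mem_ker, LinearMap.pi_apply_eq_sum_univ φ] at this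
    simpa [mul_comm] using this
  have hcoeff := Fintype.linearIndependent_iff.mp hg _ hvanish
  exact hφ (LinearMap.ext fun x ↦ by simp [LinearMap.pi_apply_eq_sum_univ φ x, hcoeff])

theorem exists_strictMono_isUnit_of_linearIndependent [LinearOrder α] {n : ℕ} {g : Fin n → α → K}
    (hg : LinearIndependent K g) :
    ∃ idx : Fin n → α, StrictMono idx ∧ IsUnit (Matrix.of fun j k ↦ g j (idx k)) := by
  obtain ⟨idx, hmono, hli⟩ := exists_strictMono_linearIndependent_comp_of_span_eq_top
    hg.span_range_swap_eq_top (finrank_fin_fun K)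
  exact ⟨idx, hmono, Matrix.linearIndependent_cols_iff_isUnit.mp hli⟩

end

theorem LinearIndependent.inner_hilbertBasis {ι κ E : Type*} [NormedAddCommGroup E]
    [InnerProductSpace ℝ E] {f : κ → E} (hf : LinearIndependent ℝ f) (b : HilbertBasis ι ℝ E) :
    LinearIndependent ℝ fun j i ↦ inner ℝ (f j) (b i) := by
  let L : E →ₗ[ℝ] ι → ℝ := LinearMap.pi fun i ↦ (innerₗ E).flip (b i)
  refine hf.map' L (LinearMap.ker_eq_bot'.mpr fun x hx ↦ b.repr.map_eq_zero_iff.mp ?_)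
  ext i
  simpa [L, b.repr_apply_apply, real_inner_comm] using congrFun hx i

theorem stmt10_general (n : ℕ) (v : HilbertBasis ℕ ℝ Hsp)
    (f : Fin n → Hsp) (hf : LinearIndependent ℝ f) :
    ∃ idx : Fin n → ℕ, StrictMono idx ∧
      IsUnit (Matrix.of fun j k : Fin n => (inner ℝ (f j) (v (idx k)) : ℝ)) :=
  exists_strictMono_isUnit_of_linearIndependent (hf.inner_hilbertBasis v)

/-- Let `(v_k)` be a Hilbert (orthonormal) basis of `H`.
If `(f₁,…,fₙ)` is linearly independent over `ℝ`, then there exist indices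
`i₁ < … < iₙ` such that the `n×n` matrix with entries `⟪f_j, v_{i_k}⟫` is
invertible; equivalently the sets `U_I` cover `E`. -/
theorem stmt10 (n : ℕ) (hn : 1 ≤ n) (v : HilbertBasis ℕ ℝ Hsp)
    (f : Fin n → Hsp) (hf : LinearIndependent ℝ f) :
    ∃ idx : Fin n → ℕ, StrictMono idx ∧
      IsUnit (Matrix.of fun j k : Fin n => (inner ℝ (f j) (v (idx k)) : ℝ)) :=
  stmt10_general n v f hf
end

section
/- The quotient map p : E → E/GL(n,ℝ) is a locally trivial principal GL(n,ℝ)-bundle: every point of the orbit space E/GL(n,ℝ) has an open neighborhood V together with a homeomorphism φ : p⁻¹(V) → GL(n,ℝ) × V such that the second component of φ equals p and φ is GL(n,ℝ)-equivariant, i.e. if φ(f) = (g_f, p(f)) then φ(h · f) = (h g_f, p(f)) for all h ∈ GL(n,ℝ). (Explicitly, over p(U_I) one may take φ(f) = (g_f, p(f)) where f = g_f · f' is the unique factorization with (⟪f'_j, v_{i_k}⟫)_{j,k} the identity matrix.) -/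
open MeasureTheory Set

/-- The group `GL(n,ℝ)`. -/
abbrev GLn (n : ℕ) : Type := Matrix.GeneralLinearGroup (Fin n) ℝ

/-- `E ⊆ Hⁿ`: the space of `ℝ`-linearly independent `n`-tuples, with the
subspace topology of the product topology. -/
abbrev Esp (n : ℕ) : Type := {f : Fin n → Hsp // LinearIndependent ℝ f}

/-- `GL(n,ℝ)` acts on `E` by `(g · (f₁,…,fₙ))ᵢ = Σⱼ aᵢⱼ fⱼ`
(this action is free, by Statement 2). -/
noncomputable instance glMulActionE (n : ℕ) : MulAction (GLn n) (Esp n) where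
  smul g f := ⟨fun i => ∑ j, ((g : Matrix (Fin n) (Fin n) ℝ) i j) • (f : Fin n → Hsp) j,
    by
      have hf := f.2
      rw [Fintype.linearIndependent_iff] at hf ⊢
      intro c hc
      have key : ∀ j, (∑ i, c i * (g : Matrix (Fin n) (Fin n) ℝ) i j) = 0 := by
        apply hf
        calc ∑ j, (∑ i, c i * (g : Matrix (Fin n) (Fin n) ℝ) i j) • (f : Fin n → Hsp) j
            = ∑ i, c i • ∑ j, ((g : Matrix (Fin n) (Fin n) ℝ) i j) • (f : Fin n → Hsp) j := by
              simp only [Finset.sum_smul, Finset.smul_sum, smul_smul]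
              rw [Finset.sum_comm]
          _ = 0 := hc
      have hv : Matrix.vecMul c (g : Matrix (Fin n) (Fin n) ℝ) = 0 := by
        funext j; simpa [Matrix.vecMul, dotProduct] using key j
      intro i
      have hc0 : c = 0 := by
        have h2 := congrArg
          (fun v => Matrix.vecMul v ((g⁻¹ : GLn n) : Matrix (Fin n) (Fin n) ℝ)) hv
        simp only [Matrix.vecMul_vecMul, Units.mul_inv, Matrix.vecMul_one,
          Matrix.zero_vecMul] at h2
        exact h2
      simp [hc0]⟩
  one_smul f := Subtype.ext (funext fun i => by
    show ∑ j, ((1 : GLn n) : Matrix (Fin n) (Fin n) ℝ) i j • (f : Fin n → Hsp) j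
      = (f : Fin n → Hsp) i
    simp [Matrix.one_apply, ite_smul])
  mul_smul g h f := Subtype.ext (funext fun i => by
    show ∑ j, ((g * h : GLn n) : Matrix (Fin n) (Fin n) ℝ) i j • (f : Fin n → Hsp) j
      = ∑ j, (g : Matrix (Fin n) (Fin n) ℝ) i j •
          ∑ k, (h : Matrix (Fin n) (Fin n) ℝ) j k • (f : Fin n → Hsp) k
    simp only [Matrix.GeneralLinearGroup.coe_mul, Matrix.mul_apply, Finset.sum_smul,
      Finset.smul_sum, smul_smul]
    rw [Finset.sum_comm])

/-- The action is indeed `(g · (f₁,…,fₙ))ᵢ = Σⱼ aᵢⱼ fⱼ`. -/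
theorem glMulActionE_smul_def (n : ℕ) (g : GLn n) (f : Esp n) :
    ((g • f : Esp n) : Fin n → Hsp)
      = fun i => ∑ j, ((g : Matrix (Fin n) (Fin n) ℝ) i j) • (f : Fin n → Hsp) j :=
  rfl

/-- The orbit space `E/GL(n,ℝ)` with the quotient topology. -/
abbrev QEsp (n : ℕ) : Type := Quotient (MulAction.orbitRel (GLn n) (Esp n))

/-- The quotient map `p : E → E/GL(n,ℝ)`. -/
noncomputable def pq (n : ℕ) : Esp n → QEsp n := Quotient.mk (MulAction.orbitRel (GLn n) (Esp n))

/-!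
An equivariant map `τ : p⁻¹(V) → G` (that is, `τ (g • y) = g * τ y`) trivializes `p` over `V`:
`s (p y) = τ(y)⁻¹ • y` is a well-defined section, continuous because `p` restricted to `p⁻¹(V)`
is still an open quotient map, and `y ↦ (τ y, p y)` has inverse `(g, v) ↦ g • s v`.
For `E → E/GL(n,ℝ)` such a `τ` is `f ↦ (⟪f_j, w_k⟫)_{j,k}` on the tuples where this matrix is
invertible, and taking `w = f₀` covers the orbit of `f₀` because the Gram matrix of a linearly
independent tuple is positive definite.
-/

noncomputable section

namespace MulAction

variable {G X : Type*} [Group G] [MulAction G X]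

theorem quotient_mk_smul (g : G) (x : X) :
    Quotient.mk (orbitRel G X) (g • x) = Quotient.mk (orbitRel G X) x :=
  Quotient.sound ⟨g, rfl⟩

variable {V : Set (Quotient (orbitRel G X))}

def IsEquivariant (τ : Quotient.mk (orbitRel G X) ⁻¹' V → G) : Prop :=
  ∀ (g : G) (y y' : Quotient.mk (orbitRel G X) ⁻¹' V), (y' : X) = g • (y : X) → τ y' = g * τ y

def normalize (τ : Quotient.mk (orbitRel G X) ⁻¹' V → G)
    (y : Quotient.mk (orbitRel G X) ⁻¹' V) : Quotient.mk (orbitRel G X) ⁻¹' V :=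
  ⟨(τ y)⁻¹ • (y : X), by
    show Quotient.mk _ _ ∈ V
    rw [quotient_mk_smul]
    exact y.2⟩

def localSection (τ : Quotient.mk (orbitRel G X) ⁻¹' V → G) (v : V) :
    Quotient.mk (orbitRel G X) ⁻¹' V :=
  normalize τ ⟨v.1.out, by
    show Quotient.mk _ _ ∈ V
    rw [Quotient.out_eq]
    exact v.2⟩

theorem quotient_mk_localSection (τ : Quotient.mk (orbitRel G X) ⁻¹' V → G) (v : V) :
    Quotient.mk (orbitRel G X) (localSection τ v : X) = v := by
  rw [localSection, normalize, quotient_mk_smul, Quotient.out_eq]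

variable {τ : Quotient.mk (orbitRel G X) ⁻¹' V → G}

theorem IsEquivariant.apply_normalize (hτ : IsEquivariant τ)
    (y : Quotient.mk (orbitRel G X) ⁻¹' V) : τ (normalize τ y) = 1 := by
  rw [hτ (τ y)⁻¹ y (normalize τ y) rfl, inv_mul_cancel]

theorem IsEquivariant.normalize_eq_of_mk_eq (hτ : IsEquivariant τ)
    {y y' : Quotient.mk (orbitRel G X) ⁻¹' V}
    (h : Quotient.mk (orbitRel G X) (y : X) = Quotient.mk (orbitRel G X) (y' : X)) :
    normalize τ y = normalize τ y' := by
  obtain ⟨g, hg⟩ := Quotient.exact h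
  apply Subtype.ext
  simp only [normalize, ← hg, hτ g y' y hg.symm, mul_inv_rev, mul_smul, inv_smul_smul]

theorem IsEquivariant.localSection_restrictPreimage (hτ : IsEquivariant τ)
    (y : Quotient.mk (orbitRel G X) ⁻¹' V) :
    localSection τ (V.restrictPreimage (Quotient.mk (orbitRel G X)) y) = normalize τ y :=
  hτ.normalize_eq_of_mk_eq (Quotient.out_eq _)

variable [TopologicalSpace G] [TopologicalSpace X] [ContinuousInv G] [ContinuousSMul G X]

theorem IsEquivariant.continuous_localSection (hτ : IsEquivariant τ) (hτc : Continuous τ) :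
    Continuous (localSection τ) := by
  have hq := (isOpenQuotientMap_quotientMk (Γ := G) (T := X)).restrictPreimage V
  rw [hq.isQuotientMap.continuous_iff]
  have : localSection τ ∘ V.restrictPreimage (Quotient.mk (orbitRel G X)) = normalize τ :=
    funext hτ.localSection_restrictPreimage
  rw [this]
  exact (hτc.inv.smul continuous_subtype_val).subtype_mk _

def IsEquivariant.trivialization (hτ : IsEquivariant τ) (hτc : Continuous τ) :
    Quotient.mk (orbitRel G X) ⁻¹' V ≃ₜ G × V where
  toFun y := (τ y, V.restrictPreimage (Quotient.mk (orbitRel G X)) y)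
  invFun p := ⟨p.1 • (localSection τ p.2 : X), by
    show Quotient.mk _ _ ∈ V
    rw [quotient_mk_smul, quotient_mk_localSection]
    exact p.2.2⟩
  left_inv y := by
    apply Subtype.ext
    simp only [hτ.localSection_restrictPreimage, normalize, smul_inv_smul]
  right_inv p := by
    refine Prod.ext ?_ (Subtype.ext ?_)
    · show τ _ = p.1
      rw [hτ p.1 (localSection τ p.2) _ rfl, localSection, hτ.apply_normalize, mul_one]
    · exact (quotient_mk_smul _ _).trans (quotient_mk_localSection τ p.2)
  continuous_toFun := hτc.prodMk isOpenQuotientMap_quotientMk.continuous.restrictPreimage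
  continuous_invFun := by
    have hs := continuous_subtype_val.comp (hτ.continuous_localSection hτc)
    exact (continuous_fst.smul (hs.comp continuous_snd)).subtype_mk _

theorem IsEquivariant.trivialization_smul (hτ : IsEquivariant τ) (hτc : Continuous τ) {g : G}
    {y y' : Quotient.mk (orbitRel G X) ⁻¹' V} (h : (y' : X) = g • (y : X)) :
    hτ.trivialization hτc y' = (g * (hτ.trivialization hτc y).1, (hτ.trivialization hτc y).2) :=
  Prod.ext (hτ g y y' h) (Subtype.ext (by
    show Quotient.mk _ (y' : X) = Quotient.mk _ (y : X)
    rw [h, quotient_mk_smul]))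

end MulAction

section InnerMatrix

variable {ι E : Type*} [NormedAddCommGroup E] [InnerProductSpace ℝ E]

/-- For `w = (v_{i_1}, …, v_{i_n})` this is the matrix defining `U_I`. -/
def innerMatrix (v w : ι → E) : Matrix ι ι ℝ :=
  Matrix.of fun j k => inner ℝ (v j) (w k)

theorem innerMatrix_sum_smul_left [Fintype ι] (A : Matrix ι ι ℝ) (v w : ι → E) :
    innerMatrix (fun i => ∑ j, A i j • v j) w = A * innerMatrix v w := by
  ext i k
  simp only [innerMatrix, Matrix.of_apply, Matrix.mul_apply, sum_inner, real_inner_smul_left]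

theorem det_innerMatrix_self_ne_zero [Fintype ι] [DecidableEq ι] {v : ι → E}
    (hv : LinearIndependent ℝ v) : (innerMatrix v v).det ≠ 0 :=
  (Matrix.posDef_gram_of_linearIndependent hv).det_pos.ne'

theorem continuous_innerMatrix_left (w : ι → E) : Continuous fun v : ι → E => innerMatrix v w :=
  continuous_matrix fun j _ => (continuous_apply j).inner continuous_const

end InnerMatrix

theorem Matrix.GeneralLinearGroup.continuous_mkOfDetNeZero {ι K Y : Type*} [Fintype ι]
    [DecidableEq ι] [Field K] [TopologicalSpace K] [IsTopologicalRing K] [ContinuousInv₀ K]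
    [TopologicalSpace Y] {A : Y → Matrix ι ι K} (hA : Continuous A) (hdet : ∀ y, (A y).det ≠ 0) :
    Continuous fun y => mkOfDetNeZero (A y) (hdet y) := by
  refine Units.continuous_iff.mpr ⟨hA, ?_⟩
  have hinv : ∀ y, (((mkOfDetNeZero (A y) (hdet y))⁻¹ : GL ι K) : Matrix ι ι K)
      = (A y).det⁻¹ • (A y).adjugate := fun y => by
    rw [Matrix.coe_units_inv, Matrix.inv_def, Ring.inverse_eq_inv']
    rfl
  simp only [hinv]
  exact (hA.matrix_det.inv₀ hdet).smul hA.matrix_adjugate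

theorem innerMatrix_smul {n : ℕ} (g : GLn n) (f : Esp n) (w : Fin n → Hsp) :
    innerMatrix ((g • f : Esp n) : Fin n → Hsp) w = g * innerMatrix (f : Fin n → Hsp) w :=
  innerMatrix_sum_smul_left _ _ _

instance (n : ℕ) : ContinuousSMul (GLn n) (Esp n) where
  continuous_smul := by
    refine Continuous.subtype_mk (continuous_pi fun i => continuous_finsetSum _ fun j _ => ?_) _
    have hg : Continuous fun p : GLn n × Esp n => (p.1 : Matrix (Fin n) (Fin n) ℝ) i j :=
      (Units.continuous_val.comp continuous_fst).matrix_elem i j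
    have hf : Continuous fun p : GLn n × Esp n => (p.2 : Fin n → Hsp) j :=
      (continuous_apply j).comp (continuous_subtype_val.comp continuous_snd)
    exact hg.smul hf

def chartDomain {n : ℕ} (w : Fin n → Hsp) : Set (QEsp n) :=
  pq n '' {f | (innerMatrix (f : Fin n → Hsp) w).det ≠ 0}

theorem det_innerMatrix_ne_zero_of_mem {n : ℕ} {w : Fin n → Hsp} {f : Esp n}
    (hf : f ∈ pq n ⁻¹' chartDomain w) : (innerMatrix (f : Fin n → Hsp) w).det ≠ 0 := by
  obtain ⟨f', hf', hpf⟩ := hf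
  obtain ⟨g, rfl⟩ := Quotient.exact hpf
  change (innerMatrix ((g • f : Esp n) : Fin n → Hsp) w).det ≠ 0 at hf'
  rw [innerMatrix_smul, Matrix.det_mul] at hf'
  exact right_ne_zero_of_mul hf'

theorem isOpen_chartDomain {n : ℕ} (w : Fin n → Hsp) : IsOpen (chartDomain w) :=
  MulAction.isOpenQuotientMap_quotientMk.isOpenMap _ <| isOpen_ne.preimage
    ((continuous_innerMatrix_left w).comp continuous_subtype_val).matrix_det

theorem pq_mem_chartDomain_self {n : ℕ} (f : Esp n) : pq n f ∈ chartDomain (f : Fin n → Hsp) :=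
  ⟨f, det_innerMatrix_self_ne_zero f.2, rfl⟩

/-- The `GL(n,ℝ)`-coordinate `g_f` of the factorization `f = g_f · f'` with
`innerMatrix f' w = 1`. -/
def chartCoord {n : ℕ} (w : Fin n → Hsp) (y : pq n ⁻¹' chartDomain w) : GLn n :=
  Matrix.GeneralLinearGroup.mkOfDetNeZero _ (det_innerMatrix_ne_zero_of_mem y.2)

theorem isEquivariant_chartCoord {n : ℕ} (w : Fin n → Hsp) :
    MulAction.IsEquivariant (chartCoord w) := by
  intro g y y' hy
  ext : 1
  simp only [chartCoord, Matrix.GeneralLinearGroup.coe_mul, hy, innerMatrix_smul]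
  rfl

theorem continuous_chartCoord {n : ℕ} (w : Fin n → Hsp) : Continuous (chartCoord w) :=
  Matrix.GeneralLinearGroup.continuous_mkOfDetNeZero
    ((continuous_innerMatrix_left w).comp (continuous_subtype_val.comp continuous_subtype_val)) _

end

theorem stmt13_general (n : ℕ) :
    ∀ x : QEsp n, ∃ V : Set (QEsp n), IsOpen V ∧ x ∈ V ∧
      ∃ φ : (pq n ⁻¹' V : Set (Esp n)) ≃ₜ GLn n × V,
        (∀ y : (pq n ⁻¹' V : Set (Esp n)), ((φ y).2 : QEsp n) = pq n (y : Esp n)) ∧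
        (∀ (h : GLn n) (y y' : (pq n ⁻¹' V : Set (Esp n))),
          (y' : Esp n) = h • (y : Esp n) → φ y' = (h * (φ y).1, (φ y).2)) := by
  intro x
  obtain ⟨f, rfl⟩ := Quotient.exists_rep x
  have hτ := isEquivariant_chartCoord (f : Fin n → Hsp)
  exact ⟨_, isOpen_chartDomain _, pq_mem_chartDomain_self f,
    hτ.trivialization (continuous_chartCoord _), fun _ => rfl,
    fun _ _ _ hy => hτ.trivialization_smul _ hy⟩

/-- The quotient map `p : E → E/GL(n,ℝ)` is a locally trivial
principal `GL(n,ℝ)`-bundle: every point of `E/GL(n,ℝ)` has an open neighborhood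
`V` and a homeomorphism `φ : p⁻¹(V) ≃ₜ GL(n,ℝ) × V` whose second component is
`p` and which is `GL(n,ℝ)`-equivariant: if `φ(f) = (g_f, p(f))` then
`φ(h · f) = (h g_f, p(f))` for all `h ∈ GL(n,ℝ)`. -/
theorem stmt13 (n : ℕ) (hn : 1 ≤ n) :
    ∀ x : QEsp n, ∃ V : Set (QEsp n), IsOpen V ∧ x ∈ V ∧
      ∃ φ : (pq n ⁻¹' V : Set (Esp n)) ≃ₜ GLn n × V,
        (∀ y : (pq n ⁻¹' V : Set (Esp n)), ((φ y).2 : QEsp n) = pq n (y : Esp n)) ∧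
        (∀ (h : GLn n) (y y' : (pq n ⁻¹' V : Set (Esp n))),
          (y' : Esp n) = h • (y : Esp n) → φ y' = (h * (φ y).1, (φ y).2)) :=
  stmt13_general n
end
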